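/- arXiv:1308.4562 — 4 statements merged into one kernel-verified Lean document; each statement's English description precedes it below -/
import Mathlib

section
/- Let λ ≠ 0, α ∈ (0,1], c₁ > 0, and let L : ℝ → ℝ satisfy the large deviation estimate and the Hölder bound |L(E) − L(E′)| ≤ c₁|E−E′|^α for all E, E′ ∈ [−2,2]. Then there is a constant c > 0 (depending only on λ, α, c₁) such that for every κ ∈ (0,1) there exist κ′ > 0 and N₀ ∈ ℤ₊ such that for all N ≥ N₀ and all E₀ with [E₀−κ, E₀+κ] ⊂ [−2,2]: ℙ_V[ sup_{|E−E₀| < κ} log‖M_N(E)‖ ≥ L(E₀)·N + c·κ^α·N ] ≤ e^{−κ′N}. -/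
open scoped BigOperators

noncomputable section

/-- Value `v_j ∈ {−1,1}` of the potential at 1-indexed site `j ∈ [1,N]` (0 outside). -/
def vOf {N : ℕ} (V : Fin N → Bool) (j : ℕ) : ℝ :=
  if h : 1 ≤ j ∧ j ≤ N then (if V ⟨j - 1, by omega⟩ then 1 else -1) else 0

/-- The Anderson–Bernoulli Hamiltonian `H_N` with coupling `lam`. -/
def Ham (lam : ℝ) {N : ℕ} (V : Fin N → Bool) : Matrix (Fin N) (Fin N) ℝ :=
  Matrix.of fun m n =>
    if m = n then lam * (if V n then 1 else -1)
    else if m.val + 1 = n.val ∨ n.val + 1 = m.val then 1 else 0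

/-- Uniform probability of an event on configurations `{−1,1}^N`. -/
def prVal (N : ℕ) (A : Set ((Fin N) → Bool)) : ℝ := (Nat.card A : ℝ) / 2 ^ N

/-- Expectation w.r.t. the uniform measure on `{−1,1}^N`. -/
def expVal (N : ℕ) (f : ((Fin N) → Bool) → ℝ) : ℝ := (∑ V : (Fin N) → Bool, f V) / 2 ^ N

open Classical in
/-- Number of eigenvalues (with multiplicity) of `H_N` that are `≤ E`. -/
def eigCountLE (lam : ℝ) {N : ℕ} (V : Fin N → Bool) (E : ℝ) : ℕ :=
  (((Ham lam V).charpoly.roots).filter (fun x => x ≤ E)).card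

open Classical in
/-- Number of eigenvalues (with multiplicity) of `H_N` lying in a set `S`. -/
def eigCountIn (lam : ℝ) {N : ℕ} (V : Fin N → Bool) (S : Set ℝ) : ℕ :=
  (((Ham lam V).charpoly.roots).filter (fun x => x ∈ S)).card

/-- `lam` satisfies the algebraic condition with parameter `C`. -/
def AlgCond (C lam : ℝ) : Prop :=
  lam ≠ 0 ∧ ∃ P : Polynomial ℤ,
    Irreducible (P.map (Int.castRingHom ℚ)) ∧
    Polynomial.aeval lam P = 0 ∧
    (P.natDegree : ℝ) ≤ C ∧
    (∀ n : ℕ, ((|P.coeff n| : ℤ) : ℝ) ≤ |lam| ^ (-C)) ∧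
    ∃ μ : ℂ, Polynomial.aeval μ P = 0 ∧ 1 ≤ ‖μ‖

/-- `Nf` is the integrated density of states for coupling `lam`. -/
def IsIDS (lam : ℝ) (Nf : ℝ → ℝ) : Prop :=
  ∀ E : ℝ, Filter.Tendsto
    (fun N : ℕ => expVal N (fun V => (eigCountLE lam V E : ℝ)) / N)
    Filter.atTop (nhds (Nf E))

/-- One transfer matrix factor. -/
def Tmat (lam E v : ℝ) : Matrix (Fin 2) (Fin 2) ℝ := !![E - lam * v, -1; 1, 0]

/-- Transfer matrix `M_{[a,b]}(E)` (factor `j = b` leftmost, `j = a` rightmost). -/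
def Mab (lam E : ℝ) {N : ℕ} (V : Fin N → Bool) (a b : ℕ) : Matrix (Fin 2) (Fin 2) ℝ :=
  (((List.range' a (b + 1 - a)).reverse).map (fun j => Tmat lam E (vOf V j))).prod

/-- Transfer matrix `M_N(E) = M_{[1,N]}(E)`. -/
def MN (lam E : ℝ) {N : ℕ} (V : Fin N → Bool) : Matrix (Fin 2) (Fin 2) ℝ := Mab lam E V 1 N

/-- Euclidean norm on `ℝ^n`. -/
def nrm {n : ℕ} (x : Fin n → ℝ) : ℝ := Real.sqrt (∑ i, x i ^ 2)

/-- Euclidean inner product on `ℝ^n`. -/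
def iprod {n : ℕ} (x y : Fin n → ℝ) : ℝ := ∑ i, x i * y i

/-- Operator norm of a 2×2 real matrix. -/
def opNorm (M : Matrix (Fin 2) (Fin 2) ℝ) : ℝ :=
  ⨆ x : {x : Fin 2 → ℝ // nrm x = 1}, nrm (M.mulVec x.val)

/-- The large deviation estimate for the Lyapunov exponent `L`. -/
def LargeDeviation (lam : ℝ) (L : ℝ → ℝ) : Prop :=
  ∀ σ > (0 : ℝ), ∃ σ' > (0 : ℝ), ∃ C₂ > (0 : ℝ), ∀ E ∈ Set.Icc (-2 : ℝ) 2, ∀ n : ℕ, 1 ≤ n →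
    prVal n {V | σ < |Real.log (opNorm (MN lam E V)) / n - L E|} ≤ C₂ * Real.exp (-σ' * n)

/-- The unit circle in `ℝ²`. -/
def sphere1 : Set (Fin 2 → ℝ) := {x | nrm x = 1}

/-- Projective action of an invertible matrix on the circle. -/
def projAct (g : Matrix (Fin 2) (Fin 2) ℝ) (x : Fin 2 → ℝ) : Fin 2 → ℝ :=
  (nrm (g.mulVec x))⁻¹ • g.mulVec x

def gplus (lam E : ℝ) : Matrix (Fin 2) (Fin 2) ℝ := !![E + lam, -1; 1, 0]

def gminus (lam E : ℝ) : Matrix (Fin 2) (Fin 2) ℝ := !![E - lam, -1; 1, 0]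

/-- A measure on the circle is symmetric: `ν(−A) = ν(A)`. -/
def SymMeasure (ν : MeasureTheory.Measure (Fin 2 → ℝ)) : Prop :=
  ∀ A : Set (Fin 2 → ℝ), MeasurableSet A → ν ((fun x => -x) ⁻¹' A) = ν A

/-- `ν` is `E`-stationary. -/
def Stationary (lam E : ℝ) (ν : MeasureTheory.Measure (Fin 2 → ℝ)) : Prop :=
  ∀ A : Set (Fin 2 → ℝ), MeasurableSet A →
    ν A = 2⁻¹ * ν (projAct (gplus lam E) ⁻¹' A) + 2⁻¹ * ν (projAct (gminus lam E) ⁻¹' A)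

/-- Point on the circle at angle `θ`. -/
def circlePt (θ : ℝ) : Fin 2 → ℝ := ![Real.cos θ, Real.sin θ]

/-- `(E, ν)` equidistributes at exponential rate `c`. -/
def Equidistributes (lam E : ℝ) (ν : MeasureTheory.Measure (Fin 2 → ℝ)) (c : ℝ) : Prop :=
  ∀ N : ℕ, 1 ≤ N → ∀ x ∈ sphere1, ∀ f : (Fin 2 → ℝ) → ℝ, ∀ F : ℝ → ℝ, ∀ A B : ℝ,
    (∀ θ : ℝ, f (circlePt θ) = F θ) →
    ContDiff ℝ 1 F →
    (∀ θ : ℝ, F (θ + Real.pi) = F θ) →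
    (∀ θ : ℝ, |F θ| ≤ A) → (∀ θ : ℝ, |deriv F θ| ≤ B) →
    |expVal N (fun V => f (projAct (MN lam E V) x)) - ∫ y, f y ∂ν|
      ≤ Real.exp (-c * N) * (A + B)


/-- The rank-one matrix `P = [[1,0],[0,0]]`. -/
def Pmat : Matrix (Fin 2) (Fin 2) ℝ := !![1, 0; 0, 0]

/-- Dirichlet restriction `H_{[a,b]}` (1-indexed block `a ≤ n ≤ b`). -/
def HamRes (lam : ℝ) {N : ℕ} (V : Fin N → Bool) (a b : ℕ) :
    Matrix (Fin (b + 1 - a)) (Fin (b + 1 - a)) ℝ :=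
  Matrix.of fun m n =>
    if m = n then lam * vOf V (a + m.val)
    else if m.val + 1 = n.val ∨ n.val + 1 = m.val then 1 else 0

/-- Restriction of a vector to the 1-indexed coordinate window `[a,b]`. -/
def restr {N : ℕ} (η : Fin N → ℝ) (a b : ℕ) : Fin (b + 1 - a) → ℝ :=
  fun i => if h : a + i.val - 1 < N then η ⟨a + i.val - 1, h⟩ else 0

/-- The iterated product `M_{[ℓ₁+1,top]} P M_{[ℓ₂+1,ℓ₁−1]} P ⋯ P M_{[1,ℓ_k−1]}`
indexed by the decreasing list `[ℓ₁, ℓ₂, …, ℓ_k]`. -/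
def chainProd (lam E : ℝ) {N : ℕ} (V : Fin N → Bool) : ℕ → List ℕ → Matrix (Fin 2) (Fin 2) ℝ
  | top, [] => Mab lam E V 1 top
  | top, ℓ :: rest => Mab lam E V (ℓ + 1) top * Pmat * chainProd lam E V (ℓ - 1) rest

/-!
For fixed `V` every entry of `M_N(E)` is a polynomial of degree at most `N` in `E`. A real
polynomial of degree `< m` is bounded on `[-1, 1]` by `2m` times its maximum modulus on the `m`
zeros of `T_m`: Gauss–Chebyshev quadrature on these nodes is exact for `P * T_k`, so by
orthogonality each Chebyshev coefficient of `P` is at most twice that maximum. Rescaled to the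
window `|E - E₀| ≤ κ`, this bounds `sup_E ‖M_N(E)‖` by `8(N + 1)` times the largest norm at `N + 1`
nodes `E_j`. Hence the event forces a deviation `log ‖M_N(E_j)‖ / N - L(E_j) > κ^α` at some node
(the Hölder bound turns `L(E_j)` into `L(E₀) + c₁ κ^α`, and `log (8(N + 1)) < κ^α N` for large
`N`), and a union bound over the `N + 1` nodes with the large deviation estimate gives
`(N + 1) C₂ e^{-σ' N} ≤ e^{-σ' N / 2}`.
-/

open Polynomial Real Finset MeasureTheory Filter

namespace Polynomial.Chebyshev

theorem exists_eq_sum_smul_T {m : ℕ} {P : ℝ[X]} (hP : P.degree < m) :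
    ∃ c : ℕ → ℝ, P = ∑ k ∈ range m, c k • T ℝ k := by
  have hmem : P ∈ degreeLT ℝ m := mem_degreeLT.mpr hP
  rw [← Sequence.span_degreeLT (chebyshevTsequence ℝ) (by simp),
    show Set.Iio m = (range m : Set ℕ) by simp,
    Submodule.mem_span_image_finset_iff_exists_fun'] at hmem
  obtain ⟨c, hc⟩ := hmem
  exact ⟨c, hc.symm⟩

theorem integral_sum_smul_T_mul_T {m k : ℕ} (hk : k < m) (c : ℕ → ℝ) :
    ∫ x, (∑ j ∈ range m, c j • T ℝ j).eval x * (T ℝ k).eval x ∂measureT =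
      c k * ∫ x, (T ℝ k).eval x * (T ℝ k).eval x ∂measureT := by
  simp_rw [eval_finsetSum, eval_smul, smul_eq_mul, sum_mul, mul_assoc]
  rw [integral_finsetSum _ fun j _ => integrable_measureT (by fun_prop)]
  simp_rw [integral_const_mul]
  rw [sum_eq_single_of_mem k (mem_range.mpr hk) fun j _ hjk => by
    rw [integral_eval_T_real_mul_eval_T_real_measureT_of_ne hjk, mul_zero]]

theorem pi_div_two_le_integral_T_mul_self (k : ℕ) :
    π / 2 ≤ ∫ x, (T ℝ k).eval x * (T ℝ k).eval x ∂measureT := by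
  rcases eq_or_ne k 0 with rfl | hk
  · rw [Nat.cast_zero, integral_eval_T_real_mul_self_measureT_zero]; linarith [pi_pos]
  · rw [integral_T_real_mul_self_measureT_of_ne_zero hk]

theorem abs_sumZeroes_le {m : ℕ} (hm : m ≠ 0) {P : ℝ[X]} {B : ℝ}
    (hB : ∀ i ∈ range m, |P.eval (cos ((2 * i + 1) / (2 * m) * π))| ≤ B) :
    |sumZeroes m P| ≤ π * B := by
  have hsum := (abs_sum_le_sum_abs _ _).trans (sum_le_sum hB)
  rw [sum_const, card_range, nsmul_eq_mul] at hsum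
  rw [sumZeroes, abs_mul, abs_of_pos (by positivity)]
  calc π / m * |∑ i ∈ range m, P.eval (cos ((2 * i + 1) / (2 * m) * π))|
      ≤ π / m * (m * B) := by gcongr
    _ = π * B := by field_simp

theorem degree_mul_T_lt {m k : ℕ} {P : ℝ[X]} (hP : P.degree < m) (hk : k < m) :
    (P * T ℝ k).degree < (2 * m : ℕ) := by
  rcases eq_or_ne P 0 with rfl | hP0
  · rw [zero_mul, degree_zero]; exact WithBot.bot_lt_coe _
  have hPm : P.natDegree < m := (natDegree_lt_iff_degree_lt hP0).mpr hP
  have hdeg : (P * T ℝ k).natDegree < 2 * m :=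
    natDegree_mul_le.trans_lt (by rw [natDegree_T]; lia)
  exact degree_le_natDegree.trans_lt (mod_cast hdeg)

theorem abs_coeff_T_le {m : ℕ} {P : ℝ[X]} (hP : P.degree < m) {c : ℕ → ℝ}
    (hc : P = ∑ k ∈ range m, c k • T ℝ k) {B : ℝ}
    (hB : ∀ i ∈ range m, |P.eval (cos ((2 * i + 1) / (2 * m) * π))| ≤ B)
    {k : ℕ} (hk : k < m) : |c k| ≤ 2 * B := by
  have hquad : ∫ x, P.eval x * (T ℝ k).eval x ∂measureT = sumZeroes m (P * T ℝ k) := by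
    simp_rw [← eval_mul]
    exact integral_eq_sumZeroes (by lia) (mod_cast degree_mul_T_lt hP hk)
  have hnodes : |sumZeroes m (P * T ℝ k)| ≤ π * B := by
    refine abs_sumZeroes_le (by lia) fun i hi => ?_
    rw [eval_mul, abs_mul]
    exact (mul_le_of_le_one_right (abs_nonneg _)
      (abs_eval_T_real_le_one _ (abs_cos_le_one _))).trans (hB i hi)
  have hnorm := pi_div_two_le_integral_T_mul_self k
  rw [← hquad, hc, integral_sum_smul_T_mul_T hk, abs_mul,
    abs_of_pos (a := ∫ x, (T ℝ k).eval x * (T ℝ k).eval x ∂measureT) (by linarith [pi_pos])]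
    at hnodes
  nlinarith [abs_nonneg (c k), pi_pos]

theorem abs_eval_le_of_abs_eval_zeroes_le {m : ℕ} {P : ℝ[X]} (hP : P.degree < m) {B : ℝ}
    (hB : ∀ i ∈ range m, |P.eval (cos ((2 * i + 1) / (2 * m) * π))| ≤ B)
    {x : ℝ} (hx : |x| ≤ 1) : |P.eval x| ≤ 2 * m * B := by
  obtain ⟨c, hc⟩ := exists_eq_sum_smul_T hP
  calc |P.eval x| ≤ ∑ k ∈ range m, |c k| * |(T ℝ k).eval x| := by
        rw [hc, eval_finsetSum]
        refine (abs_sum_le_sum_abs _ _).trans_eq ?_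
        simp_rw [eval_smul, smul_eq_mul, abs_mul]
    _ ≤ ∑ k ∈ range m, 2 * B := sum_le_sum fun k hk =>
        mul_le_of_le_one_right (abs_nonneg _) (abs_eval_T_real_le_one _ hx)
          |>.trans (abs_coeff_T_le hP hc hB (mem_range.mp hk))
    _ = 2 * m * B := by rw [sum_const, card_range, nsmul_eq_mul]; ring

end Polynomial.Chebyshev

/-- The zeros `cos ((2i + 1)π / 2m)` of `T_m`, mapped affinely onto `[a - r, a + r]`. -/
def chebyshevNode (a r : ℝ) (m i : ℕ) : ℝ := a + r * cos ((2 * i + 1) / (2 * m) * π)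

theorem abs_chebyshevNode_sub_le (a : ℝ) {r : ℝ} (hr : 0 ≤ r) (m i : ℕ) :
    |chebyshevNode a r m i - a| ≤ r := by
  rw [chebyshevNode, add_sub_cancel_left, abs_mul, abs_of_nonneg hr]
  exact mul_le_of_le_one_right hr (abs_cos_le_one _)

theorem abs_eval_le_of_abs_eval_chebyshevNode_le {m : ℕ} {P : ℝ[X]} (hP : P.degree < m)
    {a r : ℝ} (hr : 0 < r) {B : ℝ} (hB : ∀ i ∈ range m, |P.eval (chebyshevNode a r m i)| ≤ B)
    {x : ℝ} (hx : |x - a| ≤ r) : |P.eval x| ≤ 2 * m * B := by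
  set Q := P.comp (C r * X + C a)
  have hQ : ∀ y, Q.eval y = P.eval (a + r * y) := fun y => by
    simp only [Q, eval_comp, eval_add, eval_mul, eval_C, eval_X, add_comm]
  have hQdeg : Q.degree < m := by
    rwa [degree_comp (by rw [degree_linear hr.ne']; exact zero_lt_one), degree_linear hr.ne',
      mul_one]
  have hy : |(x - a) / r| ≤ 1 := by
    rwa [abs_div, abs_of_pos hr, div_le_one hr]
  have := Chebyshev.abs_eval_le_of_abs_eval_zeroes_le hQdeg
    (fun i hi => by rw [hQ]; exact hB i hi) hy
  rwa [hQ, mul_div_cancel₀ _ hr.ne', add_sub_cancel] at this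

theorem Matrix.natDegree_list_prod_apply_le {n R : Type*} [Fintype n] [DecidableEq n]
    [Semiring R] {d : ℕ} (l : List (Matrix n n R[X]))
    (hl : ∀ A ∈ l, ∀ i j, (A i j).natDegree ≤ d) (i j : n) :
    (l.prod i j).natDegree ≤ d * l.length := by
  induction l generalizing i j with
  | nil =>
    rw [List.prod_nil, Matrix.one_apply]
    split_ifs <;> simp
  | cons A l ih =>
    rw [List.prod_cons, Matrix.mul_apply, List.length_cons, mul_add_one, add_comm]
    refine natDegree_sum_le_of_forall_le _ _ fun k _ => natDegree_mul_le.trans ?_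
    exact add_le_add (hl A List.mem_cons_self i k)
      (ih (fun B hB => hl B (List.mem_cons_of_mem A hB)) k j)

def transferPoly (lam v : ℝ) : Matrix (Fin 2) (Fin 2) ℝ[X] := !![X - C (lam * v), -1; 1, 0]

theorem transferPoly_map_eval (lam v E : ℝ) :
    (transferPoly lam v).map (eval E) = Tmat lam E v := by
  ext i j
  fin_cases i <;> fin_cases j <;> simp [transferPoly, Tmat]

theorem natDegree_transferPoly_apply_le (lam v : ℝ) (i j : Fin 2) :
    (transferPoly lam v i j).natDegree ≤ 1 := by
  fin_cases i <;> fin_cases j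
  · simpa [transferPoly] using natDegree_X_sub_C_le (lam * v)
  all_goals simp [transferPoly]

def MNPoly (lam : ℝ) {N : ℕ} (V : Fin N → Bool) : Matrix (Fin 2) (Fin 2) ℝ[X] :=
  ((List.range' 1 N).reverse.map fun j => transferPoly lam (vOf V j)).prod

theorem MN_eq_map_eval (lam E : ℝ) {N : ℕ} (V : Fin N → Bool) :
    MN lam E V = (MNPoly lam V).map (eval E) := by
  rw [MN, Mab, Nat.add_sub_cancel, MNPoly, ← coe_evalRingHom, ← RingHom.mapMatrix_apply,
    map_list_prod, List.map_map]
  congr 1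
  exact List.map_congr_left fun j _ => (transferPoly_map_eval lam (vOf V j) E).symm

theorem natDegree_MNPoly_apply_le (lam : ℝ) {N : ℕ} (V : Fin N → Bool) (i j : Fin 2) :
    (MNPoly lam V i j).natDegree ≤ N := by
  have := Matrix.natDegree_list_prod_apply_le (d := 1)
    ((List.range' 1 N).reverse.map fun k => transferPoly lam (vOf V k)) ?_ i j
  · simpa [MNPoly] using this
  · simp only [List.mem_map]
    rintro _ ⟨k, -, rfl⟩
    exact natDegree_transferPoly_apply_le lam _

theorem abs_apply_le_nrm {n : ℕ} (x : Fin n → ℝ) (i : Fin n) : |x i| ≤ nrm x := by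
  rw [nrm, ← sqrt_sq_eq_abs]
  exact sqrt_le_sqrt (single_le_sum (f := fun i => x i ^ 2) (fun i _ => sq_nonneg _) (mem_univ i))

theorem nrm_le_sum_abs {n : ℕ} (x : Fin n → ℝ) : nrm x ≤ ∑ i, |x i| := by
  rw [nrm, sqrt_le_left (sum_nonneg fun i _ => abs_nonneg _)]
  simpa only [sq_abs] using sum_sq_le_sq_sum_of_nonneg (s := univ) fun i _ => abs_nonneg (x i)

theorem nrm_mulVec_le {m n : ℕ} (M : Matrix (Fin m) (Fin n) ℝ) {x : Fin n → ℝ} (hx : nrm x = 1) :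
    nrm (M.mulVec x) ≤ ∑ i, ∑ j, |M i j| := by
  refine (nrm_le_sum_abs _).trans (sum_le_sum fun i _ => ?_)
  simp only [Matrix.mulVec, dotProduct]
  refine (abs_sum_le_sum_abs _ _).trans (sum_le_sum fun j _ => ?_)
  rw [abs_mul]
  exact mul_le_of_le_one_right (abs_nonneg _) (hx ▸ abs_apply_le_nrm x j)

theorem nrm_single {n : ℕ} (i : Fin n) : nrm (Pi.single i 1) = 1 := by
  simp [nrm, Pi.single_apply]

instance : Nonempty {x : Fin 2 → ℝ // nrm x = 1} := ⟨⟨Pi.single 0 1, nrm_single 0⟩⟩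

theorem opNorm_le_sum_abs (M : Matrix (Fin 2) (Fin 2) ℝ) : opNorm M ≤ ∑ i, ∑ j, |M i j| :=
  ciSup_le fun x => nrm_mulVec_le M x.2

theorem abs_apply_le_opNorm (M : Matrix (Fin 2) (Fin 2) ℝ) (i j : Fin 2) :
    |M i j| ≤ opNorm M := by
  have hbdd :
      BddAbove (Set.range fun x : {x : Fin 2 → ℝ // nrm x = 1} => nrm (M.mulVec x.val)) :=
    ⟨_, Set.forall_mem_range.mpr fun x => nrm_mulVec_le M x.2⟩
  calc |M i j| = |(M.mulVec (Pi.single j 1)) i| := by simp [Matrix.mulVec_single]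
    _ ≤ nrm (M.mulVec (Pi.single j 1)) := abs_apply_le_nrm _ i
    _ ≤ opNorm M := le_ciSup hbdd ⟨Pi.single j 1, nrm_single j⟩

theorem opNorm_pos {M : Matrix (Fin 2) (Fin 2) ℝ} (hM : M ≠ 0) : 0 < opNorm M := by
  obtain ⟨i, j, hij⟩ : ∃ i j, M i j ≠ 0 := by
    by_contra! h
    exact hM (Matrix.ext h)
  exact (abs_pos.mpr hij).trans_le (abs_apply_le_opNorm M i j)

theorem det_MN (lam E : ℝ) {N : ℕ} (V : Fin N → Bool) : (MN lam E V).det = 1 := by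
  rw [MN, Mab, ← Matrix.coe_detMonoidHom, map_list_prod, List.map_map]
  refine List.prod_eq_one fun d hd => ?_
  obtain ⟨j, -, rfl⟩ := List.mem_map.mp hd
  simp [Tmat, Matrix.det_fin_two_of]

theorem opNorm_MN_pos (lam E : ℝ) {N : ℕ} (V : Fin N → Bool) : 0 < opNorm (MN lam E V) :=
  opNorm_pos fun h => by simpa [h] using det_MN lam E V

theorem opNorm_MN_le_of_forall_chebyshevNode (lam : ℝ) {E₀ κ : ℝ} (hκ : 0 < κ) {N : ℕ}
    (V : Fin N → Bool) {B : ℝ}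
    (hB : ∀ j ∈ range (N + 1), opNorm (MN lam (chebyshevNode E₀ κ (N + 1) j) V) ≤ B)
    {E : ℝ} (hE : |E - E₀| ≤ κ) : opNorm (MN lam E V) ≤ 8 * (N + 1) * B := by
  have hentry : ∀ a b, |MN lam E V a b| ≤ 2 * (N + 1) * B := fun a b => by
    have hdeg : (MNPoly lam V a b).degree < ↑(N + 1) :=
      degree_le_of_natDegree_le (natDegree_MNPoly_apply_le lam V a b) |>.trans_lt
        (mod_cast N.lt_succ_self)
    have := abs_eval_le_of_abs_eval_chebyshevNode_le hdeg hκ (B := B) (fun j hj => by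
      simpa [MN_eq_map_eval] using (abs_apply_le_opNorm _ a b).trans (hB j hj)) hE
    simpa [MN_eq_map_eval] using this
  refine (opNorm_le_sum_abs _).trans ?_
  simp only [Fin.sum_univ_two]
  linarith [hentry 0 0, hentry 0 1, hentry 1 0, hentry 1 1]

theorem sSup_log_opNorm_MN_le (lam : ℝ) {E₀ κ : ℝ} (hκ : 0 < κ) {N : ℕ} (V : Fin N → Bool)
    {β : ℝ}
    (hβ : ∀ j ∈ range (N + 1), log (opNorm (MN lam (chebyshevNode E₀ κ (N + 1) j) V)) ≤ β) :
    sSup ((fun E => log (opNorm (MN lam E V))) '' {E | |E - E₀| < κ})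
      ≤ log (8 * (N + 1)) + β := by
  have hne : {E | |E - E₀| < κ}.Nonempty := ⟨E₀, by simpa using hκ⟩
  refine csSup_le (hne.image _) (Set.forall_mem_image.mpr fun E hE => ?_)
  have hnodes : ∀ j ∈ range (N + 1),
      opNorm (MN lam (chebyshevNode E₀ κ (N + 1) j) V) ≤ exp β := fun j hj =>
    (log_le_iff_le_exp (opNorm_MN_pos _ _ _)).mp (hβ j hj)
  rw [← log_exp β, ← log_mul (by positivity) (exp_pos β).ne']
  exact log_le_log (opNorm_MN_pos _ _ _)
    (opNorm_MN_le_of_forall_chebyshevNode lam hκ V hnodes (le_of_lt hE))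

theorem prVal_mono {N : ℕ} {A B : Set (Fin N → Bool)} (h : A ⊆ B) : prVal N A ≤ prVal N B := by
  unfold prVal
  gcongr
  exact Nat.card_mono (Set.toFinite B) h

theorem prVal_biUnion_le {N : ℕ} {ι : Type*} (s : Finset ι) (A : ι → Set (Fin N → Bool)) :
    prVal N (⋃ i ∈ s, A i) ≤ ∑ i ∈ s, prVal N (A i) := by
  simp only [prVal, ← sum_div, Nat.card_coe_set_eq]
  gcongr
  exact_mod_cast s.set_ncard_biUnion_le A

theorem eventually_add_log_lt_mul (A : ℝ) {ε : ℝ} (hε : 0 < ε) :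
    ∀ᶠ n : ℕ in atTop, A + log (n + 1) < ε * n := by
  have hlog : ∀ᶠ x : ℝ in atTop, log x ≤ ε / 2 * x := by
    filter_upwards [isLittleO_log_id_atTop.def (half_pos hε), eventually_ge_atTop 0]
      with x hx hx0
    rw [norm_eq_abs, norm_eq_abs, id, abs_of_nonneg hx0] at hx
    exact (le_abs_self _).trans hx
  filter_upwards [(tendsto_atTop_add_const_right _ 1 tendsto_natCast_atTop_atTop).eventually hlog,
    tendsto_natCast_atTop_atTop.eventually (eventually_gt_atTop ((2 * A + ε) / ε))] with n hn hA
  rw [div_lt_iff₀ hε] at hA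
  linarith

theorem eventually_add_one_mul_mul_exp_le {C s : ℝ} (hC : 0 < C) (hs : 0 < s) :
    ∀ᶠ n : ℕ in atTop, (n + 1) * C * exp (-s * n) ≤ exp (-(s / 2) * n) := by
  filter_upwards [eventually_add_log_lt_mul (log C) (half_pos hs)] with n hn
  calc (n + 1) * C * exp (-s * n) = exp (log C + log (n + 1) + -s * n) := by
        rw [exp_add, exp_add, exp_log hC, exp_log (by positivity)]; ring
    _ ≤ exp (-(s / 2) * n) := exp_le_exp.mpr (by linarith)

theorem exists_deviation_at_chebyshevNode (lam : ℝ) (L : ℝ → ℝ) {E₀ κ σ δ : ℝ} (hκ : 0 < κ)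
    {N : ℕ} (hN : 1 ≤ N) (hlog : log (8 * (N + 1)) < σ * N)
    (hL : ∀ j, L (chebyshevNode E₀ κ (N + 1) j) ≤ L E₀ + δ) {V : Fin N → Bool}
    (hV : (L E₀ + δ + 2 * σ) * N ≤
      sSup ((fun E => log (opNorm (MN lam E V))) '' {E | |E - E₀| < κ})) :
    ∃ j ∈ range (N + 1), σ < |log (opNorm (MN lam (chebyshevNode E₀ κ (N + 1) j) V)) / N -
      L (chebyshevNode E₀ κ (N + 1) j)| := by
  by_contra! hgood
  have hNpos : (0 : ℝ) < N := mod_cast hN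
  have hβ : ∀ j ∈ range (N + 1),
      log (opNorm (MN lam (chebyshevNode E₀ κ (N + 1) j) V)) ≤ (L E₀ + δ + σ) * N :=
    fun j hj => (div_le_iff₀ hNpos).mp (by linarith [(abs_le.mp (hgood j hj)).2, hL j])
  have := sSup_log_opNorm_MN_le lam hκ V hβ
  linarith

theorem uniform_upper_bound_transfer_general (lam : ℝ)
    (α : ℝ) (hα : α ∈ Set.Ioc (0 : ℝ) 1) (c₁ : ℝ) (hc₁ : 0 < c₁) :
    ∃ c > (0 : ℝ), ∀ L : ℝ → ℝ, LargeDeviation lam L →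
      (∀ E ∈ Set.Icc (-2 : ℝ) 2, ∀ E' ∈ Set.Icc (-2 : ℝ) 2, |L E - L E'| ≤ c₁ * |E - E'| ^ α) →
      ∀ κ ∈ Set.Ioo (0 : ℝ) 1, ∃ κ' > (0 : ℝ), ∃ N₀ : ℕ, ∀ N : ℕ, N₀ ≤ N →
        ∀ E₀ : ℝ, Set.Icc (E₀ - κ) (E₀ + κ) ⊆ Set.Icc (-2 : ℝ) 2 →
        prVal N {V | L E₀ * N + c * κ ^ α * N ≤
            sSup ((fun E => Real.log (opNorm (MN lam E V))) '' {E | |E - E₀| < κ})}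
          ≤ Real.exp (-κ' * N) := by
  refine ⟨c₁ + 2, by linarith, fun L hLD hHol κ hκ => ?_⟩
  set σ := κ ^ α
  have hσ : 0 < σ := rpow_pos_of_pos hκ.1 α
  obtain ⟨σ', hσ', C₂, hC₂, hdev⟩ := hLD σ hσ
  obtain ⟨N₀, hN₀⟩ := eventually_atTop.mp ((eventually_add_log_lt_mul (log 8) hσ).and
    ((eventually_add_one_mul_mul_exp_le hC₂ hσ').and (eventually_ge_atTop 1)))
  refine ⟨σ' / 2, half_pos hσ', N₀, fun N hN E₀ hwin => ?_⟩
  obtain ⟨hlog, htail, hN1⟩ := hN₀ N hN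
  set Ej := chebyshevNode E₀ κ (N + 1)
  have hdist : ∀ j, |Ej j - E₀| ≤ κ := abs_chebyshevNode_sub_le E₀ hκ.1.le _
  have hEj : ∀ j, Ej j ∈ Set.Icc (-2 : ℝ) 2 := fun j =>
    hwin ⟨by linarith [(abs_le.mp (hdist j)).1], by linarith [(abs_le.mp (hdist j)).2]⟩
  have hE₀ : E₀ ∈ Set.Icc (-2 : ℝ) 2 := hwin ⟨by linarith [hκ.1], by linarith [hκ.1]⟩
  have hLEj : ∀ j, L (Ej j) ≤ L E₀ + c₁ * σ := fun j => by
    have hpow : |Ej j - E₀| ^ α ≤ σ := rpow_le_rpow (abs_nonneg _) (hdist j) hα.1.le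
    linarith [le_abs_self (L (Ej j) - L E₀), hHol _ (hEj j) E₀ hE₀,
      mul_le_mul_of_nonneg_left hpow hc₁.le]
  calc prVal N {V | L E₀ * N + (c₁ + 2) * σ * N ≤
          sSup ((fun E => log (opNorm (MN lam E V))) '' {E | |E - E₀| < κ})}
      ≤ prVal N (⋃ j ∈ range (N + 1),
          {V | σ < |log (opNorm (MN lam (Ej j) V)) / N - L (Ej j)|}) := prVal_mono fun V hV => by
        simpa using exists_deviation_at_chebyshevNode lam L hκ.1 hN1
          (by rwa [log_mul (by norm_num) (by positivity)]) hLEj (by linarith [hV.out])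
    _ ≤ ∑ j ∈ range (N + 1), C₂ * exp (-σ' * N) :=
        (prVal_biUnion_le _ _).trans (sum_le_sum fun j _ => hdev _ (hEj j) N hN1)
    _ = (N + 1) * C₂ * exp (-σ' * N) := by
        rw [sum_const, card_range, nsmul_eq_mul]; push_cast; ring
    _ ≤ exp (-(σ' / 2) * N) := htail

theorem uniform_upper_bound_transfer (lam : ℝ) (hlam : lam ≠ 0)
    (α : ℝ) (hα : α ∈ Set.Ioc (0 : ℝ) 1) (c₁ : ℝ) (hc₁ : 0 < c₁) :
    ∃ c > (0 : ℝ), ∀ L : ℝ → ℝ, LargeDeviation lam L →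
      (∀ E ∈ Set.Icc (-2 : ℝ) 2, ∀ E' ∈ Set.Icc (-2 : ℝ) 2, |L E - L E'| ≤ c₁ * |E - E'| ^ α) →
      ∀ κ ∈ Set.Ioo (0 : ℝ) 1, ∃ κ' > (0 : ℝ), ∃ N₀ : ℕ, ∀ N : ℕ, N₀ ≤ N →
        ∀ E₀ : ℝ, Set.Icc (E₀ - κ) (E₀ + κ) ⊆ Set.Icc (-2 : ℝ) 2 →
        prVal N {V | L E₀ * N + c * κ ^ α * N ≤
            sSup ((fun E => Real.log (opNorm (MN lam E V))) '' {E | |E - E₀| < κ})}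
          ≤ Real.exp (-κ' * N) :=
  uniform_upper_bound_transfer_general lam α hα c₁ hc₁

end
end

section
/- Let λ, E ∈ ℝ, N ∈ ℤ₊ and V ∈ {−1,1}^N. If E is an eigenvalue of H_N^{(V)}, then ‖M_N(E)·e₁‖ ≤ 1 or ‖M_N(E)^{−1}·e₂‖ ≤ 1, where e₁ = (1,0)ᵀ, e₂ = (0,1)ᵀ and ‖·‖ is the Euclidean norm on ℝ². -/
open scoped BigOperators

noncomputable section

/-!
An eigenvector `ψ` of `H_N`, padded by `ψ₀ = ψ_{N+1} = 0`, solves the three-term recurrence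
`ψ_{j+1} = (E - λ v_j) ψ_j - ψ_{j-1}`, so `M_N(E) (ψ₁, 0)ᵀ = (0, ψ_N)ᵀ` with `ψ₁ ≠ 0`. Hence
`M_N(E) e₁ = c e₂` for some `c`, and `M_N(E)⁻¹ e₂ = c⁻¹ e₁`: the two norms are `|c|` and `|c|⁻¹`.
-/

open Matrix

lemma nrm_smul {n : ℕ} (c : ℝ) (x : Fin n → ℝ) : nrm (c • x) = |c| * nrm x := by
  simp only [nrm, Pi.smul_apply, smul_eq_mul, mul_pow, ← Finset.mul_sum]
  rw [Real.sqrt_mul (sq_nonneg c), Real.sqrt_sq_eq_abs]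

lemma nrm_mulVec_le_one_or_nrm_inv_mulVec_le_one {n : ℕ} {M : Matrix (Fin n) (Fin n) ℝ}
    (hM : IsUnit M.det) {x y : Fin n → ℝ} (hx : nrm x = 1) (hy : nrm y = 1) {c : ℝ}
    (hxy : M *ᵥ x = c • y) : nrm (M *ᵥ x) ≤ 1 ∨ nrm (M⁻¹ *ᵥ y) ≤ 1 := by
  rw [hxy, nrm_smul, hy, mul_one]
  rcases le_or_gt |c| 1 with hc | hc
  · exact .inl hc
  · have hc0 : c ≠ 0 := abs_pos.mp (one_pos.trans hc)
    have hinv : M⁻¹ *ᵥ y = c⁻¹ • x := by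
      rw [← inv_smul_smul₀ hc0 y, mulVec_smul, ← hxy, mulVec_mulVec, nonsing_inv_mul _ hM,
        one_mulVec]
    rw [hinv, nrm_smul, hx, mul_one, abs_inv]
    exact .inr (inv_le_one_of_one_le₀ hc.le)

section TransferMatrix

variable {lam E : ℝ} {N : ℕ} {V : Fin N → Bool}

lemma Tmat_mulVec (w p q : ℝ) :
    Tmat lam E w *ᵥ ![p, q] = ![(E - lam * w) * p - q, p] := by
  ext i
  fin_cases i <;> simp [Tmat, mulVec, dotProduct, Fin.sum_univ_two, sub_eq_add_neg]

lemma det_Mab (a b : ℕ) : (Mab lam E V a b).det = 1 := by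
  rw [Mab, ← Matrix.coe_detMonoidHom, map_list_prod]
  refine List.prod_eq_one fun d hd => ?_
  simp only [List.map_map, List.mem_map] at hd
  obtain ⟨j, -, rfl⟩ := hd
  simp [Tmat, det_fin_two_of]

lemma Mab_succ_right {a b : ℕ} (h : a ≤ b + 1) :
    Mab lam E V a (b + 1) = Tmat lam E (vOf V (b + 1)) * Mab lam E V a b := by
  rw [Mab, Mab, show b + 1 + 1 - a = (b + 1 - a) + 1 by omega, List.range'_concat,
    show a + 1 * (b + 1 - a) = b + 1 by omega]
  simp

lemma Mab_one_mulVec_of_recurrence {ψ : ℕ → ℝ}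
    (hψ : ∀ b < N, ψ (b + 2) = (E - lam * vOf V (b + 1)) * ψ (b + 1) - ψ b) :
    ∀ b ≤ N, Mab lam E V 1 b *ᵥ ![ψ 1, ψ 0] = ![ψ (b + 1), ψ b] := by
  intro b hb
  induction b with
  | zero => simp [Mab]
  | succ b ih =>
    rw [Mab_succ_right (by omega), ← mulVec_mulVec, ih (by omega), Tmat_mulVec, ← hψ b hb]

end TransferMatrix

section Eigenvector

variable {N : ℕ}

/-- Sites are `1, …, N`; the zero padding is the Dirichlet condition `ψ₀ = ψ_{N+1} = 0`. -/
def extendVec (v : Fin N → ℝ) (j : ℕ) : ℝ :=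
  if h : 1 ≤ j ∧ j ≤ N then v ⟨j - 1, by omega⟩ else 0

@[simp]
lemma extendVec_zero (v : Fin N → ℝ) : extendVec v 0 = 0 := by
  simp [extendVec]

lemma extendVec_of_lt (v : Fin N → ℝ) {j : ℕ} (hj : N < j) : extendVec v j = 0 := by
  rw [extendVec, dif_neg (by omega)]

@[simp]
lemma extendVec_val_succ (v : Fin N → ℝ) (i : Fin N) : extendVec v (i + 1) = v i := by
  rw [extendVec, dif_pos (by omega)]
  simp

lemma vOf_val_succ (V : Fin N → Bool) (i : Fin N) : vOf V (i + 1) = if V i then 1 else -1 := by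
  rw [vOf, dif_pos (by omega)]
  simp

lemma sum_ite_val_succ_eq (v : Fin N → ℝ) (k : ℕ) :
    ∑ n : Fin N, (if (n : ℕ) + 1 = k then v n else 0) = extendVec v k := by
  rcases lt_or_ge N k with hk | hk
  · rw [extendVec_of_lt v hk, Finset.sum_eq_zero fun n _ => if_neg (by omega)]
  · rcases k with _ | k
    · simp
    · have hval (n : Fin N) : (n : ℕ) + 1 = k + 1 ↔ n = ⟨k, hk⟩ := by simp [Fin.ext_iff]
      simp only [hval, Finset.sum_ite_eq', Finset.mem_univ, if_true]
      exact (extendVec_val_succ v ⟨k, hk⟩).symm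

lemma Ham_mulVec_apply (lam : ℝ) (V : Fin N → Bool) (v : Fin N → ℝ) (i : Fin N) :
    (Ham lam V *ᵥ v) i =
      extendVec v i + lam * vOf V (i + 1) * v i + extendVec v (i + 2) := by
  have hrow (n : Fin N) : Ham lam V i n =
      (if (n : ℕ) + 1 = i then 1 else 0) + (if n = i then lam * vOf V (i + 1) else 0) +
        (if (n : ℕ) + 1 = i + 2 then 1 else 0) := by
    by_cases hn : n = i
    · subst hn; simp [Ham, vOf_val_succ]
    · have hne : i ≠ n := Ne.symm hn
      simp only [Ham, of_apply, hn, hne, if_false, add_zero]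
      split_ifs <;> first | omega | norm_num
  simp only [mulVec, dotProduct, hrow, add_mul, ite_mul, one_mul, zero_mul,
    Finset.sum_add_distrib, sum_ite_val_succ_eq, Finset.sum_ite_eq', Finset.mem_univ, if_true]

lemma extendVec_recurrence_of_mulVec_eq_smul {lam E : ℝ} {V : Fin N → Bool} {v : Fin N → ℝ}
    (hv : Ham lam V *ᵥ v = E • v) (b : ℕ) (hb : b < N) :
    extendVec v (b + 2) = (E - lam * vOf V (b + 1)) * extendVec v (b + 1) - extendVec v b := by
  have hrow := congrFun hv ⟨b, hb⟩
  rw [Ham_mulVec_apply, Pi.smul_apply, smul_eq_mul, ← extendVec_val_succ v ⟨b, hb⟩] at hrow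
  linarith

-- If `ψ₀ = ψ₁ = 0`, the transfer matrices propagate the zero vector.
lemma extendVec_one_ne_zero {lam E : ℝ} {V : Fin N → Bool} {v : Fin N → ℝ} (hv0 : v ≠ 0)
    (hv : Ham lam V *ᵥ v = E • v) : extendVec v 1 ≠ 0 := by
  intro h1
  refine hv0 (funext fun i => ?_)
  have hprop := Mab_one_mulVec_of_recurrence (extendVec_recurrence_of_mulVec_eq_smul hv) i
    i.is_lt.le
  rw [h1, extendVec_zero, show (![0, 0] : Fin 2 → ℝ) = 0 by simp, mulVec_zero] at hprop
  simpa using (congrFun hprop 0).symm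

end Eigenvector

theorem eigenvalue_transfer_norm_general (lam E : ℝ) (N : ℕ) (V : Fin N → Bool)
    (hE : ∃ v : Fin N → ℝ, v ≠ 0 ∧ (Ham lam V).mulVec v = E • v) :
    nrm ((MN lam E V).mulVec ![1, 0]) ≤ 1 ∨ nrm ((MN lam E V)⁻¹.mulVec ![0, 1]) ≤ 1 := by
  obtain ⟨v, hv0, hv⟩ := hE
  have h1 := extendVec_one_ne_zero hv0 hv
  have hprop := Mab_one_mulVec_of_recurrence (extendVec_recurrence_of_mulVec_eq_smul hv) N le_rfl
  rw [extendVec_zero, extendVec_of_lt v (Nat.lt_succ_self N)] at hprop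
  have hM : MN lam E V *ᵥ ![1, 0] = (extendVec v N / extendVec v 1) • ![0, 1] := by
    rw [show (![1, 0] : Fin 2 → ℝ) = (extendVec v 1)⁻¹ • ![extendVec v 1, 0] by
      ext i; fin_cases i <;> simp [h1], mulVec_smul, MN, hprop]
    ext i; fin_cases i <;> simp [div_eq_inv_mul]
  refine nrm_mulVec_le_one_or_nrm_inv_mulVec_le_one ?_ ?_ ?_ hM
  · rw [MN, det_Mab]; exact isUnit_one
  · simp [nrm, Fin.sum_univ_two]
  · simp [nrm, Fin.sum_univ_two]

theorem eigenvalue_transfer_norm (lam E : ℝ) (N : ℕ) (hN : 1 ≤ N) (V : Fin N → Bool)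
    (hE : ∃ v : Fin N → ℝ, v ≠ 0 ∧ (Ham lam V).mulVec v = E • v) :
    nrm ((MN lam E V).mulVec ![1, 0]) ≤ 1 ∨ nrm ((MN lam E V)⁻¹.mulVec ![0, 1]) ≤ 1 :=
  eigenvalue_transfer_norm_general lam E N V hE

end
end

section
/- Let λ ∈ ℝ, N ∈ ℤ₊, V ∈ {−1,1}^N, and P = [[1,0],[0,0]]. For all E, E₁ ∈ ℝ one has the exact expansion M_N(E) = ∑_{k=0}^{N} (E−E₁)^k · ∑_{1 ≤ ℓ_k < ℓ_{k−1} < ⋯ < ℓ_1 ≤ N} M_{[ℓ₁+1, N]}(E₁) · P · M_{[ℓ₂+1, ℓ₁−1]}(E₁) · P · ⋯ · P · M_{[1, ℓ_k−1]}(E₁), where the k = 0 term is M_N(E₁). -/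
/-!
Write each factor as `T_j(E) = T_j(E₁) + (E - E₁) P` and expand the product `M_{[1,N]}(E)`
over the subsets `t ⊆ [1,N]` of sites where the `P`-term is chosen. A `P` at site `ℓ` replaces
the factor `T_ℓ(E₁)`, so the term of `t` is `(E - E₁)^|t|` times the chain product of `t`;
grouping the subsets by cardinality gives the expansion.
-/

open scoped BigOperators

noncomputable section

lemma Mab_of_lt (lam E : ℝ) {N : ℕ} (V : Fin N → Bool) {a b : ℕ} (h : b < a) :
    Mab lam E V a b = 1 := by
  simp [Mab, Nat.sub_eq_zero_of_le (show b + 1 ≤ a by omega)]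

lemma Mab_succ (lam E : ℝ) {N : ℕ} (V : Fin N → Bool) {a b : ℕ} (h : a ≤ b + 1) :
    Mab lam E V a (b + 1) = Tmat lam E (vOf V (b + 1)) * Mab lam E V a b := by
  have hlen : b + 1 + 1 - a = (b + 1 - a) + 1 := by omega
  have hlast : a + 1 * (b + 1 - a) = b + 1 := by omega
  rw [Mab, hlen, List.range'_concat, List.reverse_append, hlast]
  simp [Mab]

lemma Tmat_eq_add_smul_Pmat (lam E E₁ v : ℝ) :
    Tmat lam E v = Tmat lam E₁ v + (E - E₁) • Pmat := by
  ext i j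
  fin_cases i <;> fin_cases j <;> simp [Tmat, Pmat]

lemma chainProd_succ_of_forall_le (lam E : ℝ) {N : ℕ} (V : Fin N → Bool) {b : ℕ} {l : List ℕ}
    (hl : ∀ x ∈ l, x ≤ b) :
    chainProd lam E V (b + 1) l = Tmat lam E (vOf V (b + 1)) * chainProd lam E V b l := by
  cases l with
  | nil => exact Mab_succ lam E V (by omega)
  | cons ℓ rest =>
    simp only [chainProd, Mab_succ lam E V (show ℓ + 1 ≤ b + 1 by simpa using hl ℓ (by simp)),
      Matrix.mul_assoc]

lemma chainProd_succ_cons_self (lam E : ℝ) {N : ℕ} (V : Fin N → Bool) (b : ℕ) (l : List ℕ) :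
    chainProd lam E V (b + 1) ((b + 1) :: l) = Pmat * chainProd lam E V b l := by
  simp [chainProd, Mab_of_lt lam E V (show b + 1 < b + 1 + 1 by omega)]

lemma Finset.reverse_sort_le_eq_sort_ge {α : Type*} [LinearOrder α] (s : Finset α) :
    (s.sort (· ≤ ·)).reverse = s.sort (· ≥ ·) :=
  ((s.sortedGT_sort.eq_reverse_of_mem_iff_of_sortedLT (by simp)) s.sortedLT_sort).symm

lemma Finset.reverse_sort_insert_of_forall_le {α : Type*} [LinearOrder α] {a : α} {s : Finset α}
    (hle : ∀ x ∈ s, x ≤ a) (ha : a ∉ s) :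
    ((insert a s).sort (· ≤ ·)).reverse = a :: (s.sort (· ≤ ·)).reverse := by
  rw [Finset.reverse_sort_le_eq_sort_ge, Finset.reverse_sort_le_eq_sort_ge,
    Finset.sort_insert _ hle ha]

theorem Mab_one_eq_sum_powerset (lam E E₁ : ℝ) {N : ℕ} (V : Fin N → Bool) (b : ℕ) :
    Mab lam E V 1 b = ∑ t ∈ (Finset.Icc 1 b).powerset,
      (E - E₁) ^ t.card • chainProd lam E₁ V b ((t.sort (· ≤ ·)).reverse) := by
  induction b with
  | zero => simp [chainProd, Mab_of_lt lam _ V zero_lt_one]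
  | succ b ih =>
    have hnot : b + 1 ∉ Finset.Icc 1 b := by simp
    have hle : ∀ t ∈ (Finset.Icc 1 b).powerset, ∀ x ∈ t, x ≤ b := fun t ht x hx =>
      (Finset.mem_Icc.mp (Finset.mem_powerset.mp ht hx)).2
    rw [← Finset.insert_Icc_right_eq_Icc_add_one (by omega), Finset.sum_powerset_insert hnot,
      Mab_succ lam E V (by omega), Tmat_eq_add_smul_Pmat lam E E₁, ih, add_mul]
    congr 1
    · simp only [Finset.mul_sum, mul_smul_comm]
      refine Finset.sum_congr rfl fun t ht => ?_
      rw [chainProd_succ_of_forall_le lam E₁ V fun x hx => hle t ht x (by simpa using hx)]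
    · simp only [Finset.mul_sum, mul_smul_comm, smul_mul_assoc]
      refine Finset.sum_congr rfl fun t ht => ?_
      have hbt : b + 1 ∉ t := fun h => by simpa using hle t ht _ h
      rw [Finset.card_insert_of_notMem hbt, Finset.reverse_sort_insert_of_forall_le
        (fun x hx => (hle t ht x hx).trans b.le_succ) hbt, chainProd_succ_cons_self, smul_smul,
        pow_succ]

theorem transfer_matrix_expansion_general (lam : ℝ) (N : ℕ) (V : Fin N → Bool) (E E₁ : ℝ) :
    MN lam E V = ∑ k ∈ Finset.range (N + 1), (E - E₁) ^ k •
      ∑ s ∈ Finset.powersetCard k (Finset.Icc 1 N),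
        chainProd lam E₁ V N ((s.sort (· ≤ ·)).reverse) := by
  rw [MN, Mab_one_eq_sum_powerset lam E E₁ V N, Finset.sum_powerset, Nat.card_Icc,
    Nat.add_sub_cancel]
  refine Finset.sum_congr rfl fun k _ => ?_
  rw [Finset.smul_sum]
  exact Finset.sum_congr rfl fun s hs => by rw [(Finset.mem_powersetCard.mp hs).2]

theorem transfer_matrix_expansion (lam : ℝ) (N : ℕ) (hN : 1 ≤ N) (V : Fin N → Bool) (E E₁ : ℝ) :
    MN lam E V = ∑ k ∈ Finset.range (N + 1), (E - E₁) ^ k •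
      ∑ s ∈ Finset.powersetCard k (Finset.Icc 1 N),
        chainProd lam E₁ V N ((s.sort (· ≤ ·)).reverse) :=
  transfer_matrix_expansion_general lam N V E E₁
end
end

section
/- Let λ, E₀ ∈ ℝ, N ∈ ℤ₊, V ∈ {−1,1}^N and 1 < j < N. If η ∈ ℝ^N satisfies η_j = 0, then ‖(H_{[1,j−1]} − E₀)·η|_{[1,j−1]}‖₂² + ‖(H_{[j+1,N]} − E₀)·η|_{[j+1,N]}‖₂² ≤ ‖(H_N − E₀)·η‖₂², where η|_{[a,b]} ∈ ℝ^{b−a+1} denotes the restriction of η to coordinates a, …, b. -/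
open scoped BigOperators

noncomputable section

/-!
The matrix `H_N` is tridiagonal, so row `n` of `(H_N - E₀) η` only sees `η_{n-1}, η_n, η_{n+1}`.
Since `η_j = 0`, the rows `n < j` of `(H_N - E₀) η` are exactly the entries of
`(H_{[1,j-1]} - E₀) η|_{[1,j-1]}`, and the rows `n > j` those of `(H_{[j+1,N]} - E₀) η|_{[j+1,N]}`.
Hence the left-hand side is `‖(H_N - E₀) η‖²` minus the square of its `j`-th entry.
-/

open Finset
open scoped Matrix

lemma nrm_sq {n : ℕ} (x : Fin n → ℝ) : nrm x ^ 2 = ∑ i, x i ^ 2 :=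
  Real.sq_sqrt (sum_nonneg fun _ _ => sq_nonneg _)

lemma nrm_sq_eq_sum_Ico {n : ℕ} (y : Fin n → ℝ) (g : ℕ → ℝ) (s : ℕ)
    (h : ∀ i : Fin n, y i = g (s + i)) : nrm y ^ 2 = ∑ q ∈ Ico s (s + n), g q ^ 2 := by
  rw [nrm_sq, sum_Ico_eq_sum_range, add_tsub_cancel_left, ← Fin.sum_univ_eq_sum_range]
  simp only [h]

def extendByZero {N : ℕ} (x : Fin N → ℝ) (q : ℕ) : ℝ :=
  if h : q < N then x ⟨q, h⟩ else 0

section ExtendByZero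

variable {N : ℕ} (x : Fin N → ℝ)

@[simp]
lemma extendByZero_val (i : Fin N) : extendByZero x i = x i := by
  simp [extendByZero]

lemma extendByZero_of_le {q : ℕ} (hq : N ≤ q) : extendByZero x q = 0 := by
  simp [extendByZero, Nat.not_lt.mpr hq]

lemma restr_apply_eq_extendByZero {a b : ℕ} (ha : 1 ≤ a) (k : Fin (b + 1 - a)) :
    restr x a b k = extendByZero x (a - 1 + k) := by
  rw [restr, extendByZero, show a + k.val - 1 = a - 1 + k by omega]

end ExtendByZero

/-- `hs` says `x (s - 1) = 0`, phrased so as to be vacuous when `s = 0`. -/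
lemma sum_Ico_eq_sum_range_of_tridiagonal {e : ℕ → ℕ → ℝ}
    (he : ∀ p q, p ≠ q → p + 1 ≠ q → q + 1 ≠ p → e p q = 0) {x : ℕ → ℝ} {s t N p : ℕ}
    (htN : t ≤ N) (hp : p ∈ Ico s t) (hs : ∀ q, q + 1 = s → x q = 0) (ht : x t = 0) :
    ∑ q ∈ Ico s t, e p q * x q = ∑ q ∈ range N, e p q * x q := by
  rw [mem_Ico] at hp
  refine sum_subset (fun q hq => by simp only [mem_Ico, mem_range] at hq ⊢; omega) ?_
  intro q _ hq
  rw [mem_Ico, not_and_or, not_le, not_lt] at hq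
  by_cases hfar : p ≠ q ∧ p + 1 ≠ q ∧ q + 1 ≠ p
  · rw [he p q hfar.1 hfar.2.1 hfar.2.2, zero_mul]
  · have hq' : q + 1 = s ∨ q = t := by omega
    rcases hq' with hq' | rfl
    · rw [hs q hq', mul_zero]
    · rw [ht, mul_zero]

section Entries

variable (lam E₀ : ℝ) {N : ℕ} (V : Fin N → Bool)

/-- The entry `(H_N - E₀)_{p+1, q+1}`, 0-indexed, as a function of natural indices. -/
def jacobiEntry (p q : ℕ) : ℝ :=
  if p = q then lam * vOf V (p + 1) - E₀ else if p + 1 = q ∨ q + 1 = p then 1 else 0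

lemma jacobiEntry_eq_zero {p q : ℕ} (h₀ : p ≠ q) (h₁ : p + 1 ≠ q) (h₂ : q + 1 ≠ p) :
    jacobiEntry lam E₀ V p q = 0 := by
  simp [jacobiEntry, h₀, h₁, h₂]

lemma ham_sub_smul_one_apply (m n : Fin N) :
    (Ham lam V - E₀ • 1) m n = jacobiEntry lam E₀ V m n := by
  have hv : vOf V (n + 1) = if V n then 1 else -1 := by
    simp [vOf, Nat.succ_le_of_lt n.isLt]
  simp only [Matrix.sub_apply, Matrix.smul_apply, Matrix.one_apply, Ham, Matrix.of_apply,
    smul_eq_mul, jacobiEntry, Fin.val_inj]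
  split_ifs <;> simp_all

lemma hamRes_sub_smul_one_apply {a b : ℕ} (ha : 1 ≤ a) (m n : Fin (b + 1 - a)) :
    (HamRes lam V a b - E₀ • 1) m n = jacobiEntry lam E₀ V (a - 1 + m) (a - 1 + n) := by
  have hdiag : a - 1 + m = a - 1 + n ↔ m = n := by rw [add_right_inj, Fin.val_inj]
  have hadj : a - 1 + m + 1 = a - 1 + n ∨ a - 1 + n + 1 = a - 1 + m ↔
      m.val + 1 = n ∨ n.val + 1 = m := by omega
  simp only [Matrix.sub_apply, Matrix.smul_apply, Matrix.one_apply, HamRes, Matrix.of_apply,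
    smul_eq_mul, jacobiEntry, hdiag, hadj]
  rw [show a - 1 + m + 1 = a + m by omega]
  split_ifs <;> ring

lemma ham_sub_smul_one_mulVec_apply (η : Fin N → ℝ) (p : Fin N) :
    ((Ham lam V - E₀ • 1) *ᵥ η) p =
      ∑ q ∈ range N, jacobiEntry lam E₀ V p q * extendByZero η q := by
  simp only [Matrix.mulVec, dotProduct, ham_sub_smul_one_apply, ← extendByZero_val η]
  exact Fin.sum_univ_eq_sum_range (fun q => jacobiEntry lam E₀ V p q * extendByZero η q) N

lemma hamRes_sub_smul_one_mulVec_restr_apply (η : Fin N → ℝ) {a b : ℕ} (ha : 1 ≤ a)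
    (i : Fin (b + 1 - a)) :
    ((HamRes lam V a b - E₀ • 1) *ᵥ restr η a b) i =
      ∑ q ∈ Ico (a - 1) b, jacobiEntry lam E₀ V (a - 1 + i) q * extendByZero η q := by
  simp only [Matrix.mulVec, dotProduct, hamRes_sub_smul_one_apply _ _ _ ha,
    restr_apply_eq_extendByZero η ha]
  rw [sum_Ico_eq_sum_range, show b - (a - 1) = b + 1 - a by omega]
  exact Fin.sum_univ_eq_sum_range
    (fun k => jacobiEntry lam E₀ V (a - 1 + i) (a - 1 + k) * extendByZero η (a - 1 + k)) _

lemma hamRes_sub_smul_one_mulVec_restr_apply_eq_ham (η : Fin N → ℝ) {a b : ℕ} (ha : 1 ≤ a)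
    (hbN : b ≤ N) (hleft : ∀ q, q + 1 = a - 1 → extendByZero η q = 0)
    (hright : extendByZero η b = 0) (i : Fin (b + 1 - a)) :
    ((HamRes lam V a b - E₀ • 1) *ᵥ restr η a b) i =
      extendByZero ((Ham lam V - E₀ • 1) *ᵥ η) (a - 1 + i) := by
  have hi : a - 1 + i < N := by omega
  rw [hamRes_sub_smul_one_mulVec_restr_apply _ _ _ _ ha,
    sum_Ico_eq_sum_range_of_tridiagonal (fun _ _ => jacobiEntry_eq_zero lam E₀ V) hbN
      (by rw [mem_Ico]; omega) hleft hright,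
    extendByZero, dif_pos hi, ham_sub_smul_one_mulVec_apply]

lemma nrm_sq_hamRes_sub_smul_one_mulVec_restr (η : Fin N → ℝ) {a b : ℕ} (ha : 1 ≤ a)
    (hab : a ≤ b + 1) (hbN : b ≤ N) (hleft : ∀ q, q + 1 = a - 1 → extendByZero η q = 0)
    (hright : extendByZero η b = 0) :
    nrm ((HamRes lam V a b - E₀ • 1) *ᵥ restr η a b) ^ 2 =
      ∑ q ∈ Ico (a - 1) b, extendByZero ((Ham lam V - E₀ • 1) *ᵥ η) q ^ 2 := by
  rw [nrm_sq_eq_sum_Ico _ _ (a - 1)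
    (hamRes_sub_smul_one_mulVec_restr_apply_eq_ham lam E₀ V η ha hbN hleft hright),
    show a - 1 + (b + 1 - a) = b by omega]

end Entries

theorem dirichlet_decoupling (lam E₀ : ℝ) (N : ℕ) (V : Fin N → Bool)
    (j : ℕ) (hj1 : 1 < j) (hjN : j < N) (η : Fin N → ℝ) (hηj : η ⟨j - 1, by omega⟩ = 0) :
    nrm ((HamRes lam V 1 (j - 1) - E₀ • 1).mulVec (restr η 1 (j - 1))) ^ 2 +
      nrm ((HamRes lam V (j + 1) N - E₀ • 1).mulVec (restr η (j + 1) N)) ^ 2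
    ≤ nrm ((Ham lam V - E₀ • 1).mulVec η) ^ 2 := by
  set F := extendByZero ((Ham lam V - E₀ • 1) *ᵥ η)
  have hηj' : extendByZero η (j - 1) = 0 := by
    rw [← hηj]; exact extendByZero_val η ⟨j - 1, by omega⟩
  have hleft := nrm_sq_hamRes_sub_smul_one_mulVec_restr lam E₀ V η (a := 1) (b := j - 1)
    le_rfl (by omega) (by omega) (fun q hq => by omega) hηj'
  have hright := nrm_sq_hamRes_sub_smul_one_mulVec_restr lam E₀ V η (a := j + 1) (b := N)
    (by omega) (by omega) le_rfl
    (fun q hq => by rwa [show q = j - 1 by omega]) (extendByZero_of_le η le_rfl)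
  have hfull : nrm ((Ham lam V - E₀ • 1) *ᵥ η) ^ 2 = ∑ q ∈ Ico 0 N, F q ^ 2 := by
    rw [nrm_sq_eq_sum_Ico _ F 0 fun i => by simp [F], zero_add]
  have hsplit : ∑ q ∈ Ico 0 N, F q ^ 2 =
      ∑ q ∈ Ico 0 (j - 1), F q ^ 2 + (F (j - 1) ^ 2 + ∑ q ∈ Ico j N, F q ^ 2) := by
    rw [← sum_Ico_consecutive _ (Nat.zero_le _) (show j - 1 ≤ N by omega),
      sum_eq_sum_Ico_succ_bot (show j - 1 < N by omega), show j - 1 + 1 = j by omega]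
  rw [hleft, hright, hfull, hsplit, Nat.sub_self, Nat.add_sub_cancel]
  linarith [sq_nonneg (F (j - 1))]

end
end
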